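/- Let ℓ(m) = ⌊log₂(m+1)⌋ denote the length of a natural number m. Let h, g, π : ℕ → ℕ, let p be a polynomial with natural-number coefficients, let c ∈ ℕ, and let t : ℕ → ℕ satisfy n ≤ t(n) for all n. Assume that for all x, h(π(x)) = g(x) and ℓ(π(x)) ≤ p.eval(ℓ(x)). If there are infinitely many n ∈ ℕ for which there exist x and y with g(x) = y, ℓ(x) ≤ c · t(n), and ℓ(z) ≥ 2^{t(n)} for every z with h(z) = y, then this yields a contradiction (such h, g, π, p cannot all exist). -/

import Mathlib

/-!
Composing the simulation with the short `g`-proof `x` of `y` gives an `h`-proof `π x` of `y`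
of length at most `p(c·t(n))`, a polynomial in `t(n)`. Polynomials are eventually dominated by
`2^m`, and `t(n) ≥ n` is unbounded along the infinitely many `n`, so for a large enough such `n`
this contradicts the lower bound `2^{t(n)}` on every `h`-proof of `y`.
-/

def natLen (m : ℕ) : ℕ := Nat.log 2 (m + 1)

open Filter Asymptotics Polynomial

theorem Polynomial.monotone_eval_nat (q : ℕ[X]) : Monotone fun m => q.eval m := by
  intro a b hab
  simp only [eval_eq_sum_range]
  gcongr

theorem Polynomial.eventually_eval_lt_pow (q : ℕ[X]) {b : ℕ} (hb : 1 < b) :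
    ∀ᶠ m in atTop, q.eval m < b ^ m := by
  set P := q.map (Nat.castRingHom ℝ)
  have hpow : (fun m : ℕ => (m : ℝ) ^ P.natDegree) =o[atTop] fun m => (b : ℝ) ^ m :=
    isLittleO_pow_const_const_pow_of_one_lt _ (by exact_mod_cast hb)
  have hP : (fun m : ℕ => P.eval (m : ℝ)) =o[atTop] fun m => (b : ℝ) ^ m := by
    refine ((P.isBigO_atTop_of_degree_le (X ^ P.natDegree) ?_).comp_tendsto
      tendsto_natCast_atTop_atTop).trans_isLittleO ?_
    · simp [degree_le_natDegree]
    · simpa [Function.comp_def] using hpow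
  filter_upwards [hP.bound one_half_pos] with m hm
  have hbm : (0 : ℝ) < (b : ℝ) ^ m := by positivity
  rw [eval_natCast_map, Nat.coe_castRingHom, Real.norm_natCast, Real.norm_of_nonneg hbm.le,
    Nat.cast_id] at hm
  have hlt : ((q.eval m : ℕ) : ℝ) < (b : ℝ) ^ m := by linarith
  exact_mod_cast hlt

/-- The combinatorial kernel of the diagonalization: if `h` p-simulates `g` via a
simulation function `π` with polynomial length bound `p`, then it cannot be that
for infinitely many `n` there are `g`-proofs of length `≤ c·t(n)` of elements
whose shortest `h`-proofs have length `≥ 2^(t(n))`. -/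
theorem no_short_simulation (h g π : ℕ → ℕ) (p : Polynomial ℕ) (c : ℕ)
    (t : ℕ → ℕ) (ht : ∀ n, n ≤ t n)
    (hsim : ∀ x, h (π x) = g x)
    (hlen : ∀ x, natLen (π x) ≤ p.eval (natLen x))
    (hinf : {n : ℕ | ∃ x y, g x = y ∧ natLen x ≤ c * t n ∧
      ∀ z, h z = y → 2 ^ t n ≤ natLen z}.Infinite) :
    False := by
  obtain ⟨N, hN⟩ := eventually_atTop.mp ((p.comp (C c * X)).eventually_eval_lt_pow one_lt_two)
  obtain ⟨n, ⟨x, y, hgx, hx, hshortest⟩, hNn⟩ := hinf.exists_gt N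
  have hlower : 2 ^ t n ≤ natLen (π x) := hshortest (π x) (by rw [hsim, hgx])
  have hupper : natLen (π x) < 2 ^ t n :=
    calc natLen (π x) ≤ p.eval (natLen x) := hlen x
      _ ≤ p.eval (c * t n) := p.monotone_eval_nat hx
      _ = (p.comp (C c * X)).eval (t n) := by simp
      _ < 2 ^ t n := hN (t n) (hNn.le.trans (ht n))
  exact hlower.not_gt hupper
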